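/- arXiv:1112.6188 — 2 statements merged into one kernel-verified Lean document; each statement's English description precedes it below -/
import Mathlib

section
/- Let A be an associative algebra over ℚ(q), let α ∈ ℚ(q), and let Q, E, E₁ ∈ A satisfy Q·E = E·Q + α·E₁ and E₁·E = q²·E·E₁. Then for every natural number r ≥ 1, Q·E^r = E^r·Q + α·q^{r-1}·[r]·E^{r-1}·E₁, where [r] = (q^r - q^{-r})/(q - q^{-1}). -/
noncomputable def q : RatFunc ℚ := RatFunc.X

/-- The quantum integer [n] = (q^n - q^{-n})/(q - q^{-1}) in ℚ(q). -/
noncomputable def qint (n : ℤ) : RatFunc ℚ := (q ^ n - q ^ (-n)) / (q - q⁻¹)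

lemma q_ne_zero : q ≠ 0 := RatFunc.X_ne_zero

lemma qsub_ne_zero : q - q⁻¹ ≠ 0 := by
  rw [sub_ne_zero]
  intro h
  have h2 : q * q = 1 := by
    have := congrArg (· * q) h
    simpa [inv_mul_cancel₀ q_ne_zero] using this
  have := congrArg RatFunc.intDegree h2
  rw [RatFunc.intDegree_mul q_ne_zero q_ne_zero, RatFunc.intDegree_one] at this
  simp only [q, RatFunc.intDegree_X] at this
  omega

lemma qint_one : qint 1 = 1 := by
  unfold qint
  rw [zpow_one, zpow_neg_one, div_self qsub_ne_zero]

lemma key (r : ℕ) : 1 + q ^ ((r : ℤ) + 1) * qint r = q ^ (r : ℤ) * qint ((r : ℤ) + 1) := by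
  have h := qsub_ne_zero
  have e1 : q ^ ((r : ℤ) + 1) * q ^ (-(r : ℤ)) = q := by
    rw [← zpow_add₀ q_ne_zero]; norm_num
  have e2 : q ^ ((r : ℤ)) * q ^ (-((r : ℤ) + 1)) = q⁻¹ := by
    rw [← zpow_add₀ q_ne_zero]; simp
  apply mul_right_cancel₀ h
  unfold qint
  rw [add_mul, one_mul, mul_assoc, mul_assoc, div_mul_cancel₀ _ h, div_mul_cancel₀ _ h]
  linear_combination e2 - e1

theorem comm_with_power {A : Type*} [Ring A] [Algebra (RatFunc ℚ) A]
    (α : RatFunc ℚ) (Q E E₁ : A)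
    (hQE : Q * E = E * Q + α • E₁)
    (hEE : E₁ * E = (q ^ (2 : ℤ)) • (E * E₁)) :
    ∀ r : ℕ, 1 ≤ r →
      Q * E ^ r = E ^ r * Q + (α * q ^ ((r : ℤ) - 1) * qint r) • (E ^ (r - 1) * E₁) := by
  intro r hr
  induction r, hr using Nat.le_induction with
  | base =>
    simpa [qint_one] using hQE
  | succ n hn ih =>
    have hE : E ^ (n - 1) * E = E ^ n := by
      rw [← pow_succ, Nat.sub_add_cancel hn]
    have hcast : (((n : ℕ) + 1 : ℕ) : ℤ) - 1 = (n : ℤ) := by push_cast; ring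
    rw [pow_succ, ← mul_assoc, ih, add_mul, mul_assoc, hQE, smul_mul_assoc,
      mul_assoc (E ^ (n - 1)), hEE, mul_smul_comm, ← mul_assoc (E ^ (n - 1)), hE,
      smul_smul, mul_add, mul_smul_comm, ← mul_assoc, Nat.add_sub_cancel, hcast, add_assoc]
    congr 1
    rw [← add_smul]
    congr 1
    have hk := key n
    have hq2 : q ^ ((n:ℤ) - 1) * q ^ (2:ℤ) = q ^ ((n:ℤ) + 1) := by
      rw [← zpow_add₀ q_ne_zero]; ring_nf
    push_cast
    linear_combination α * hk + α * qint (n:ℤ) * hq2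
end

section
/- Let V be a vector space over ℚ and let f : ℤ × ℤ → V satisfy: (i) f(m,n) = f(n,m) for all m,n; (ii) whenever f(m,n) = 0, then f(m-1,n) + f(m,n-1) = 0 and f(m+1,n) + f(m,n+1) = 0; (iii) f(n,n) = 0 for all n ∈ ℤ. Then f(m,n) = 0 for all m, n ∈ ℤ. -/
theorem propagation_lemma {V : Type*} [AddCommGroup V] [Module ℚ V]
    (f : ℤ × ℤ → V)
    (hsymm : ∀ m n : ℤ, f (m, n) = f (n, m))
    (hprop : ∀ m n : ℤ, f (m, n) = 0 →
      f (m - 1, n) + f (m, n - 1) = 0 ∧ f (m + 1, n) + f (m, n + 1) = 0)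
    (hdiag : ∀ n : ℤ, f (n, n) = 0) :
    ∀ m n : ℤ, f (m, n) = 0 := by
  have key : ∀ k : ℕ, ∀ m : ℤ, f (m, m + k) = 0 := by
    intro k
    induction k using Nat.strong_induction_on with
    | _ k ih =>
      match k with
      | 0 => intro m; simpa using hdiag m
      | 1 =>
        intro m
        have h := (hprop (m + 1) (m + 1) (hdiag (m + 1))).1
        have hs : f (m + 1, m) = f (m, m + 1) := hsymm _ _
        have h2 : f (m, m + 1) + f (m, m + 1) = 0 := by
          have : (m + 1 - 1 : ℤ) = m := by ring
          rw [this] at h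
          rw [hs] at h
          linear_combination (norm := module) h
        have : f (m, m + 1) = 0 := by
          have := congrArg (fun v => (2 : ℚ)⁻¹ • v) h2
          simpa [two_smul, smul_add, ← smul_assoc] using
            (by
              have : (2 : ℚ)⁻¹ • (f (m, m + 1) + f (m, m + 1)) = (0 : V) := by
                rw [h2, smul_zero]
              calc f (m, m + 1) = (2 : ℚ)⁻¹ • ((2 : ℚ) • f (m, m + 1)) := by
                    rw [← mul_smul]; norm_num
                _ = (2 : ℚ)⁻¹ • (f (m, m + 1) + f (m, m + 1)) := by rw [two_smul]
                _ = 0 := this)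
        simpa using this
      | (k + 2) =>
        intro m
        have h1 : f (m + 1, m + 1 + (k + 1 : ℕ)) = 0 := ih (k + 1) (by omega) (m + 1)
        have h2 : f (m + 1, m + 1 + (k : ℕ)) = 0 := ih k (by omega) (m + 1)
        have h := (hprop (m + 1) (m + 1 + (k + 1 : ℕ)) h1).1
        have e1 : (m + 1 - 1 : ℤ) = m := by ring
        have e2 : (m + 1 + ((k : ℤ) + 1) - 1 : ℤ) = m + 1 + (k : ℤ) := by ring
        push_cast at h h2 ⊢
        rw [e1, e2, h2, add_zero] at h
        have : (m + 1 + ((k : ℤ) + 1)) = m + ((k : ℤ) + 2) := by ring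
        rw [this] at h
        exact h
  intro m n
  rcases le_or_gt m n with h | h
  · obtain ⟨k, hk⟩ : ∃ k : ℕ, n = m + k := ⟨(n - m).toNat, by omega⟩
    rw [hk]; exact key k m
  · obtain ⟨k, hk⟩ : ∃ k : ℕ, m = n + k := ⟨(m - n).toNat, by omega⟩
    rw [hsymm, hk]; exact key k n
end
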